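/- arXiv:1507.05796 — 7 statements merged into one kernel-verified Lean document; each statement's English description precedes it below -/
import Mathlib

section
/- Let ℓ be an odd positive integer, let p₁, p₂ be nonnegative reals with p₁ + p₂ = 1, and let δ be a real with 0 < δ ≤ p₁ − p₂. Then ∑_{i=(ℓ+1)/2}^{ℓ} C(ℓ,i)·(p₁^i·p₂^{ℓ−i} − p₁^{ℓ−i}·p₂^i) ≥ √(2ℓ/π)·g(δ,ℓ). (For a sample of ℓ i.i.d. two-valued observations with success probability p₁, this left-hand side equals the probability that value 1 is the strict majority of the sample minus the probability that value 2 is the strict majority.) -/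
/-!
Write `ℓ = 2m + 1` and `p₁ = (1 + s)/2`, `p₂ = (1 - s)/2`. As a function of `s`, the left-hand
side is `T((1+s)/2) - T((1-s)/2)`, where `T(x) = P(Bin(ℓ, x) > m)`. The derivative of a sum of
consecutive Bernstein polynomials telescopes, so `T'(x) = ℓ C(2m,m) (x(1-x))^m`, and the
left-hand side equals `ℓ C(2m,m) 4^{-m} ∫₀ˢ (1-t²)^m dt`. For `0 ≤ c ≤ s` the integral is at
least `c (1-c²)^m`, which for `c = min(δ, 1/√ℓ)` is `g(δ, ℓ)`; finally Wallis' inequality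
`W_m ≤ π/2` is exactly `ℓ C(2m,m) / 4^m ≥ √(2ℓ/π)`.
-/

open scoped BigOperators

noncomputable def g (x y : ℝ) : ℝ :=
  if x < 1 / Real.sqrt y then x * (1 - x ^ 2) ^ ((y - 1) / 2)
  else (1 / Real.sqrt y) * (1 - 1 / y) ^ ((y - 1) / 2)

open Finset Polynomial Real

section BinomialTail

variable {R : Type*} [CommRing R]

lemma bernsteinPolynomial_eq_zero_of_lt {n ν : ℕ} (h : n < ν) :
    bernsteinPolynomial R n ν = 0 := by
  simp [bernsteinPolynomial, Nat.choose_eq_zero_of_lt h]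

variable (R) in
/-- `P(X > k)` for `X ~ Bin(n, x)`, as a polynomial in `x`. -/
noncomputable def binomialTail (n k : ℕ) : R[X] :=
  ∑ i ∈ Ioc k n, bernsteinPolynomial R n i

lemma eval_binomialTail (n k : ℕ) (x : R) :
    (binomialTail R n k).eval x = ∑ i ∈ Ioc k n, (n.choose i : R) * x ^ i * (1 - x) ^ (n - i) := by
  simp [binomialTail, eval_finsetSum, bernsteinPolynomial]

lemma derivative_binomialTail {n k : ℕ} (hk : k < n) :
    derivative (binomialTail R n k) = n * bernsteinPolynomial R (n - 1) k := by
  rw [binomialTail, derivative_sum, ← Ico_add_one_add_one_eq_Ioc, sum_Ico_eq_sum_range]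
  simp_rw [show ∀ j, k + 1 + j = k + j + 1 by omega, bernsteinPolynomial.derivative_succ,
    ← mul_sum, add_assoc]
  rw [sum_range_sub' (fun j => bernsteinPolynomial R (n - 1) (k + j)), add_zero,
    show k + (n + 1 - (k + 1)) = n by omega,
    bernsteinPolynomial_eq_zero_of_lt (show n - 1 < n by omega), sub_zero]

end BinomialTail

lemma eval_derivative_binomialTail_majority (m : ℕ) (x : ℝ) :
    (derivative (binomialTail ℝ (2 * m + 1) m)).eval x
      = (2 * m + 1) * m.centralBinom * (x * (1 - x)) ^ m := by
  rw [derivative_binomialTail (by omega), Nat.add_sub_cancel, Nat.centralBinom_eq_two_mul_choose,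
    mul_pow]
  simp [bernsteinPolynomial, show 2 * m - m = m by omega]
  ring

/-- For `2m + 1` samples with `P(1) = (1 + s)/2` and `P(2) = (1 - s)/2`: the probability that
`1` is the majority minus the probability that `2` is. -/
noncomputable def majorityBias (m : ℕ) (s : ℝ) : ℝ :=
  (binomialTail ℝ (2 * m + 1) m).eval ((1 + s) / 2) -
    (binomialTail ℝ (2 * m + 1) m).eval ((1 - s) / 2)

lemma sum_choose_mul_sub_eq_majorityBias (m : ℕ) {p₁ p₂ : ℝ} (h : p₁ + p₂ = 1) :
    ∑ i ∈ Icc (m + 1) (2 * m + 1), ((2 * m + 1).choose i : ℝ) *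
        (p₁ ^ i * p₂ ^ (2 * m + 1 - i) - p₁ ^ (2 * m + 1 - i) * p₂ ^ i)
      = majorityBias m (p₁ - p₂) := by
  rw [majorityBias, show (1 + (p₁ - p₂)) / 2 = p₁ by linarith,
    show (1 - (p₁ - p₂)) / 2 = p₂ by linarith, eval_binomialTail, eval_binomialTail,
    show 1 - p₁ = p₂ by linarith, show 1 - p₂ = p₁ by linarith, Icc_add_one_left_eq_Ioc,
    ← sum_sub_distrib]
  exact sum_congr rfl fun i _ => by ring

lemma hasDerivAt_majorityBias (m : ℕ) (s : ℝ) :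
    HasDerivAt (majorityBias m) ((2 * m + 1) * m.centralBinom / 4 ^ m * (1 - s ^ 2) ^ m) s := by
  set P := binomialTail ℝ (2 * m + 1) m
  have hplus := (P.hasDerivAt ((1 + s) / 2)).comp s
    (((hasDerivAt_id s).const_add 1).div_const 2)
  have hminus := (P.hasDerivAt ((1 - s) / 2)).comp s
    (((hasDerivAt_id s).const_sub 1).div_const 2)
  refine (hplus.sub hminus).congr_deriv ?_
  rw [eval_derivative_binomialTail_majority, eval_derivative_binomialTail_majority,
    show (1 + s) / 2 * (1 - (1 + s) / 2) = (1 - s ^ 2) / 4 by ring,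
    show (1 - s) / 2 * (1 - (1 - s) / 2) = (1 - s ^ 2) / 4 by ring, div_pow]
  ring

lemma majorityBias_eq_integral (m : ℕ) (s : ℝ) :
    majorityBias m s
      = (2 * m + 1) * m.centralBinom / 4 ^ m * ∫ t in (0 : ℝ)..s, (1 - t ^ 2) ^ m := by
  have hFTC := intervalIntegral.integral_eq_sub_of_hasDerivAt
    (a := 0) (b := s) (fun t _ => hasDerivAt_majorityBias m t)
    ((by fun_prop : Continuous fun t : ℝ =>
      (2 * m + 1) * m.centralBinom / 4 ^ m * (1 - t ^ 2) ^ m).intervalIntegrable 0 s)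
  rw [intervalIntegral.integral_const_mul] at hFTC
  simp [hFTC, majorityBias]

lemma mul_one_sub_sq_pow_le_integral (m : ℕ) {c s : ℝ} (hc : 0 ≤ c) (hcs : c ≤ s) (hs : s ≤ 1) :
    c * (1 - c ^ 2) ^ m ≤ ∫ t in (0 : ℝ)..s, (1 - t ^ 2) ^ m := by
  have hint (a b : ℝ) :
      IntervalIntegrable (fun t : ℝ => (1 - t ^ 2) ^ m) MeasureTheory.volume a b :=
    (by fun_prop : Continuous _).intervalIntegrable a b
  rw [← intervalIntegral.integral_add_adjacent_intervals (hint 0 c) (hint c s)]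
  have htail : 0 ≤ ∫ t in c..s, (1 - t ^ 2) ^ m :=
    intervalIntegral.integral_nonneg hcs fun t ht => pow_nonneg (by nlinarith [ht.1, ht.2]) m
  have hhead : ∫ _ in (0 : ℝ)..c, (1 - c ^ 2) ^ m ≤ ∫ t in (0 : ℝ)..c, (1 - t ^ 2) ^ m :=
    intervalIntegral.integral_mono_on hc intervalIntegrable_const (hint 0 c) fun t ht =>
      pow_le_pow_left₀ (by nlinarith) (by nlinarith [ht.1, ht.2]) m
  simp only [intervalIntegral.integral_const, smul_eq_mul, sub_zero] at hhead
  linarith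

lemma wallis_W_eq_centralBinom (m : ℕ) :
    Wallis.W m = 16 ^ m / ((2 * m + 1) * m.centralBinom ^ 2) := by
  have hfac : ((2 * m).factorial : ℝ) = m.centralBinom * m.factorial * m.factorial := by
    have h := Nat.choose_mul_factorial_mul_factorial (show m ≤ 2 * m by omega)
    rw [show 2 * m - m = m by omega] at h
    rw [Nat.centralBinom_eq_two_mul_choose]
    exact_mod_cast h.symm
  rw [Wallis.W_eq_factorial_ratio, hfac, pow_mul]
  have : (m.factorial : ℝ) ≠ 0 := by positivity
  field_simp
  norm_num

lemma sqrt_two_mul_div_pi_le (m : ℕ) :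
    √(2 * (2 * m + 1) / π) ≤ (2 * m + 1) * m.centralBinom / 4 ^ m := by
  have hC : (0 : ℝ) < m.centralBinom := by exact_mod_cast m.centralBinom_pos
  have hW := Wallis.W_le m
  rw [wallis_W_eq_centralBinom, div_le_iff₀ (by positivity)] at hW
  rw [Real.sqrt_le_iff, div_le_iff₀ Real.pi_pos]
  refine ⟨by positivity, ?_⟩
  rw [div_pow, ← pow_mul, show (4 : ℝ) ^ (m * 2) = 16 ^ m by rw [pow_mul']; norm_num,
    div_mul_eq_mul_div, le_div_iff₀ (by positivity)]
  calc 2 * (2 * m + 1) * (16 : ℝ) ^ m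
      ≤ 2 * (2 * m + 1) * (π / 2 * ((2 * m + 1) * m.centralBinom ^ 2)) := by gcongr
    _ = ((2 * m + 1) * m.centralBinom) ^ 2 * π := by ring

lemma g_eq_min (x : ℝ) {y : ℝ} (hy : 0 ≤ y) :
    g x y = min x (1 / √y) * (1 - min x (1 / √y) ^ 2) ^ ((y - 1) / 2) := by
  unfold g
  split_ifs with h
  · rw [min_eq_left h.le]
  · rw [min_eq_right (not_lt.1 h), div_pow, one_pow, Real.sq_sqrt hy]

theorem binary_majority_amplification_general (ℓ : ℕ) (hodd : Odd ℓ)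
    (p₁ p₂ δ : ℝ) (hp₂ : 0 ≤ p₂) (hsum : p₁ + p₂ = 1)
    (hδ0 : 0 < δ) (hδ : δ ≤ p₁ - p₂) :
    ∑ i ∈ Finset.Icc ((ℓ + 1) / 2) ℓ,
        (ℓ.choose i : ℝ) * (p₁ ^ i * p₂ ^ (ℓ - i) - p₁ ^ (ℓ - i) * p₂ ^ i)
      ≥ Real.sqrt (2 * ℓ / Real.pi) * g δ ℓ := by
  obtain ⟨m, rfl⟩ := hodd
  rw [show (2 * m + 1 + 1) / 2 = m + 1 by omega, sum_choose_mul_sub_eq_majorityBias m hsum,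
    majorityBias_eq_integral, g_eq_min δ (by positivity)]
  push_cast
  rw [show ((2 * m + 1 : ℝ) - 1) / 2 = (m : ℝ) by ring, rpow_natCast]
  set c := min δ (1 / √(2 * m + 1))
  have hc0 : 0 ≤ c := le_min hδ0.le (by positivity)
  have hcs : c ≤ p₁ - p₂ := (min_le_left _ _).trans hδ
  have hs1 : p₁ - p₂ ≤ 1 := by linarith
  have hc_sq : 0 ≤ 1 - c ^ 2 := by nlinarith
  calc √(2 * (2 * m + 1) / π) * (c * (1 - c ^ 2) ^ m)
      ≤ (2 * m + 1 : ℝ) * m.centralBinom / 4 ^ m * (c * (1 - c ^ 2) ^ m) := by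
        gcongr; exact sqrt_two_mul_div_pi_le m
    _ ≤ (2 * m + 1 : ℝ) * m.centralBinom / 4 ^ m *
          ∫ t in (0 : ℝ)..p₁ - p₂, (1 - t ^ 2) ^ m := by
        gcongr; exact mul_one_sub_sq_pow_le_integral m hc0 hcs hs1

/-- **Bias amplification for binary majority.** For an odd positive `ℓ`,
`p₁ + p₂ = 1`, `p₁, p₂ ≥ 0` and `0 < δ ≤ p₁ - p₂`,
`∑_{i=(ℓ+1)/2}^{ℓ} C(ℓ,i) (p₁^i p₂^{ℓ-i} - p₁^{ℓ-i} p₂^i) ≥ √(2ℓ/π) g(δ,ℓ)`: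
the probability that value 1 is the strict sample majority minus the probability
that value 2 is the strict sample majority is at least `√(2ℓ/π) g(δ,ℓ)`. -/
theorem binary_majority_amplification (ℓ : ℕ) (hℓ : 0 < ℓ) (hodd : Odd ℓ)
    (p₁ p₂ δ : ℝ) (hp₁ : 0 ≤ p₁) (hp₂ : 0 ≤ p₂) (hsum : p₁ + p₂ = 1)
    (hδ0 : 0 < δ) (hδ : δ ≤ p₁ - p₂) :
    ∑ i ∈ Finset.Icc ((ℓ + 1) / 2) ℓ,
        (ℓ.choose i : ℝ) * (p₁ ^ i * p₂ ^ (ℓ - i) - p₁ ^ (ℓ - i) * p₂ ^ i)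
      ≥ Real.sqrt (2 * ℓ / Real.pi) * g δ ℓ :=
  binary_majority_amplification_general ℓ hodd p₁ p₂ δ hp₂ hsum hδ0 hδ
end

section
/- Let ℓ be an odd positive integer and let p₁, p₂ be nonnegative reals with p₁ + p₂ = 1 and p₁ ≥ p₂. Then ∑_{i=(ℓ+1)/2}^{ℓ} C(ℓ,i)·(p₁^i·p₂^{ℓ−i} − p₁^{ℓ−i}·p₂^i) = C(ℓ,(ℓ+1)/2)·((ℓ+1)/2)·∫_{−(p₁−p₂)/2}^{(p₁−p₂)/2} (1/4 − t²)^{(ℓ−1)/2} dt. -/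
/-!
Write `p₁ = 1/2 + x`, `p₂ = 1/2 - x` with `x = (p₁ - p₂)/2` and `ℓ = 2k + 1`. The sum is then
`T x - T (-x)`, where `T x = ∑_{i ≥ k+1} C(ℓ,i) (1/2 + x)^i (1/2 - x)^(ℓ-i)` is an upper binomial
tail. Since `C(n,i+1) (i+1) = C(n,i) (n-i)`, the derivative of a binomial tail telescopes to its
first term, here `(k+1) C(ℓ,k+1) (1/4 - x²)^k`, and the fundamental theorem of calculus on
`[-x, x]` gives the integral.
-/

open Finset

section BinomialTail

variable (n : ℕ) (c d : ℝ)

theorem hasDerivAt_choose_mul_pow_mul_pow (i : ℕ) (x : ℝ) :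
    HasDerivAt (fun x ↦ (n.choose i : ℝ) * (c + x) ^ i * (d - x) ^ (n - i))
      ((n.choose i : ℝ) * i * (c + x) ^ (i - 1) * (d - x) ^ (n - i)
        - (n.choose (i + 1) : ℝ) * (i + 1 : ℕ) * (c + x) ^ i * (d - x) ^ (n - (i + 1))) x := by
  have hc : HasDerivAt (fun x ↦ c + x) 1 x := (hasDerivAt_id x).const_add c
  have hd : HasDerivAt (fun x ↦ d - x) (-1) x := (hasDerivAt_id x).const_sub d
  refine (((hc.fun_pow i).const_mul _).fun_mul (hd.fun_pow (n - i))).congr_deriv ?_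
  have hchoose : (n.choose (i + 1) : ℝ) * (i + 1 : ℕ) = n.choose i * (n - i : ℕ) := by
    exact_mod_cast Nat.choose_succ_right_eq n i
  rw [hchoose, Nat.sub_add_eq]
  ring

theorem hasDerivAt_sum_choose_mul_pow_mul_pow {m : ℕ} (hm : m ≤ n) (x : ℝ) :
    HasDerivAt (fun x ↦ ∑ i ∈ Icc m n, (n.choose i : ℝ) * (c + x) ^ i * (d - x) ^ (n - i))
      ((n.choose m : ℝ) * m * (c + x) ^ (m - 1) * (d - x) ^ (n - m)) x := by
  set g : ℕ → ℝ := fun j ↦ (n.choose j : ℝ) * j * (c + x) ^ (j - 1) * (d - x) ^ (n - j)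
  refine (HasDerivAt.fun_sum fun i _ ↦
    hasDerivAt_choose_mul_pow_mul_pow n c d i x).congr_deriv ?_
  have htelescope : ∑ i ∈ Icc m n, (g i - g (i + 1)) = g m - g (n + 1) := by
    rw [← neg_sub, ← sum_Icc_sub hm g, ← sum_neg_distrib]
    simp only [neg_sub]
  have hg_top : g (n + 1) = 0 := by simp [g, Nat.choose_succ_self]
  exact htelescope.trans (by rw [hg_top, sub_zero])

theorem sum_choose_mul_pow_mul_pow_sub_eq_integral {m : ℕ} (hm : m ≤ n) (a b : ℝ) :
    ∑ i ∈ Icc m n, (n.choose i : ℝ) * (c + b) ^ i * (d - b) ^ (n - i)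
      - ∑ i ∈ Icc m n, (n.choose i : ℝ) * (c + a) ^ i * (d - a) ^ (n - i)
      = (n.choose m : ℝ) * m * ∫ t in a..b, (c + t) ^ (m - 1) * (d - t) ^ (n - m) := by
  rw [← intervalIntegral.integral_const_mul]
  simp only [← mul_assoc]
  exact (intervalIntegral.integral_eq_sub_of_hasDerivAt
    (fun t _ ↦ hasDerivAt_sum_choose_mul_pow_mul_pow n c d hm t)
    (Continuous.intervalIntegrable (by fun_prop) a b)).symm

end BinomialTail

theorem sum_choose_mul_pow_sub_pow_eq_integral (k : ℕ) (x : ℝ) :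
    ∑ i ∈ Icc (k + 1) (2 * k + 1), ((2 * k + 1).choose i : ℝ) *
        ((1 / 2 + x) ^ i * (1 / 2 - x) ^ (2 * k + 1 - i)
          - (1 / 2 + x) ^ (2 * k + 1 - i) * (1 / 2 - x) ^ i)
      = ((2 * k + 1).choose (k + 1) : ℝ) * (k + 1 : ℕ) *
          ∫ t in -x..x, (1 / 4 - t ^ 2) ^ k := by
  have hsymm := sum_choose_mul_pow_mul_pow_sub_eq_integral (2 * k + 1) (1 / 2) (1 / 2)
    (m := k + 1) (by omega) (-x) x
  rw [show 2 * k + 1 - (k + 1) = k by omega, Nat.add_sub_cancel] at hsymm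
  simp only [sub_neg_eq_add, ← sub_eq_add_neg, ← mul_pow] at hsymm
  rw [← sum_sub_distrib] at hsymm
  convert hsymm using 2 with i
  · ring
  · congr 1 with t
    ring

theorem binary_majority_gap_eq_integral_general (ℓ : ℕ) (hodd : Odd ℓ)
    (p₁ p₂ : ℝ) (hsum : p₁ + p₂ = 1) :
    ∑ i ∈ Finset.Icc ((ℓ + 1) / 2) ℓ,
        (ℓ.choose i : ℝ) * (p₁ ^ i * p₂ ^ (ℓ - i) - p₁ ^ (ℓ - i) * p₂ ^ i)
      = (ℓ.choose ((ℓ + 1) / 2) : ℝ) * (((ℓ + 1) / 2 : ℕ) : ℝ) *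
        ∫ t in (-((p₁ - p₂) / 2))..((p₁ - p₂) / 2), (1 / 4 - t ^ 2) ^ ((ℓ - 1) / 2) := by
  obtain ⟨k, rfl⟩ := hodd
  have h := sum_choose_mul_pow_sub_pow_eq_integral k ((p₁ - p₂) / 2)
  rw [show 1 / 2 + (p₁ - p₂) / 2 = p₁ by linarith, show 1 / 2 - (p₁ - p₂) / 2 = p₂ by linarith] at h
  rwa [show (2 * k + 1 + 1) / 2 = k + 1 by omega, show (2 * k + 1 - 1) / 2 = k by omega]

/-- **The binary majority-probability gap as an integral.** For an odd positive `ℓ`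
and `p₁ + p₂ = 1` with `p₁ ≥ p₂ ≥ 0`,
`∑_{i=(ℓ+1)/2}^{ℓ} C(ℓ,i) (p₁^i p₂^{ℓ-i} - p₁^{ℓ-i} p₂^i)
  = C(ℓ,(ℓ+1)/2) ((ℓ+1)/2) ∫_{-(p₁-p₂)/2}^{(p₁-p₂)/2} (1/4 - t²)^{(ℓ-1)/2} dt`. -/
theorem binary_majority_gap_eq_integral (ℓ : ℕ) (hℓ : 0 < ℓ) (hodd : Odd ℓ)
    (p₁ p₂ : ℝ) (hp₁ : 0 ≤ p₁) (hp₂ : 0 ≤ p₂) (hsum : p₁ + p₂ = 1) (hge : p₂ ≤ p₁) :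
    ∑ i ∈ Finset.Icc ((ℓ + 1) / 2) ℓ,
        (ℓ.choose i : ℝ) * (p₁ ^ i * p₂ ^ (ℓ - i) - p₁ ^ (ℓ - i) * p₂ ^ i)
      = (ℓ.choose ((ℓ + 1) / 2) : ℝ) * (((ℓ + 1) / 2 : ℕ) : ℝ) *
        ∫ t in (-((p₁ - p₂) / 2))..((p₁ - p₂) / 2), (1 / 4 - t ^ 2) ^ ((ℓ - 1) / 2) :=
  binary_majority_gap_eq_integral_general ℓ hodd p₁ p₂ hsum
end

section
/- Let k ≥ 2 and ℓ ≥ 1 be integers, let p = (p_1,…,p_k) be a probability vector, and let i ≠ 1 be an index with p_1 ≥ p_i. Let X = (X_1,…,X_k) follow the multinomial distribution with ℓ trials and probabilities p, and define Pr(maj_ℓ = j) with uniform tie-breaking as below. Then Pr(maj_ℓ = 1) − Pr(maj_ℓ = i) ≥ Pr(X_1 > X_j for all j ≠ 1) − Pr(X_i > X_j for all j ≠ i). -/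
open scoped BigOperators

/-- The multinomial probability mass function: for `x` with `∑ x = ℓ`,
`Pr(X = x) = (ℓ!/∏ xⱼ!) ∏ pⱼ^{xⱼ}` (and `0` otherwise). -/
noncomputable def multPMF {k : ℕ} (ℓ : ℕ) (p : Fin k → ℝ) (x : Fin k → ℕ) : ℝ :=
  if ∑ j, x j = ℓ then (Nat.multinomial Finset.univ x : ℝ) * ∏ j, p j ^ x j else 0

/-- `W(x) = {j : x_j = max_i x_i}`, the set of most-frequent coordinates. -/
def argmaxSet {k : ℕ} (x : Fin k → ℕ) : Finset (Fin k) :=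
  Finset.univ.filter fun j => ∀ i, x i ≤ x j

/-- `Pr(maj_ℓ = j)`: the probability that `j` is the majority of a multinomial
sample with `ℓ` trials and probabilities `p`, with uniform tie-breaking. -/
noncomputable def majProb {k : ℕ} (ℓ : ℕ) (p : Fin k → ℝ) (j : Fin k) : ℝ :=
  ∑' x : Fin k → ℕ,
    multPMF ℓ p x * (if j ∈ argmaxSet x then (1 : ℝ) / (argmaxSet x).card else 0)

/-- `Pr(X_i > X_j for all j ≠ i)`: the probability that coordinate `i` of a
multinomial sample strictly exceeds all other coordinates. -/
noncomputable def strictMaxProb {k : ℕ} (ℓ : ℕ) (p : Fin k → ℝ) (i : Fin k) : ℝ :=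
  ∑' x : Fin k → ℕ, if ∀ j, j ≠ i → x j < x i then multPMF ℓ p x else 0

lemma aux_pow (a b : ℝ) (hb : 0 ≤ b) (hab : b ≤ a) (m n : ℕ) (hnm : n ≤ m) :
    a ^ n * b ^ m ≤ a ^ m * b ^ n := by
  have ha : 0 ≤ a := hb.trans hab
  obtain ⟨d, rfl⟩ : ∃ d, m = n + d := ⟨m - n, by omega⟩
  have h : b ^ d ≤ a ^ d := pow_le_pow_left₀ hb hab d
  calc a ^ n * b ^ (n + d) = (a ^ n * b ^ n) * b ^ d := by ring
    _ ≤ (a ^ n * b ^ n) * a ^ d :=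
        mul_le_mul_of_nonneg_left h (by positivity)
    _ = a ^ (n + d) * b ^ n := by ring

lemma multPMF_nonneg {k ℓ : ℕ} {p : Fin k → ℝ} (hp0 : ∀ j, 0 ≤ p j) (x : Fin k → ℕ) :
    0 ≤ multPMF ℓ p x := by
  unfold multPMF
  split
  · exact mul_nonneg (Nat.cast_nonneg _)
      (Finset.prod_nonneg fun j _ => pow_nonneg (hp0 j) _)
  · exact le_refl 0

lemma multinomial_comp_perm {k : ℕ} (x : Fin k → ℕ) (σ : Equiv.Perm (Fin k)) :
    Nat.multinomial Finset.univ (x ∘ σ) = Nat.multinomial Finset.univ x := by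
  unfold Nat.multinomial
  rw [show (∑ i, (x ∘ σ) i) = ∑ i, x i from Equiv.sum_comp σ x,
    show (∏ i, Nat.factorial ((x ∘ σ) i)) = ∏ i, Nat.factorial (x i) from
      Equiv.prod_comp σ (fun j => Nat.factorial (x j))]

lemma multPMF_swap_le {k ℓ : ℕ} (p : Fin k → ℝ) (hp0 : ∀ j, 0 ≤ p j)
    (a i : Fin k) (hia : i ≠ a) (hpi : p i ≤ p a) (x : Fin k → ℕ) (hxi : x i ≤ x a) :
    multPMF ℓ p (x ∘ Equiv.swap a i) ≤ multPMF ℓ p x := by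
  set σ := Equiv.swap a i with hσ
  have hss : ∀ m, σ (σ m) = m := fun m => by rw [hσ]; exact Equiv.swap_apply_self a i m
  unfold multPMF
  rw [show (∑ j, (x ∘ σ) j) = ∑ j, x j from Equiv.sum_comp σ x,
    multinomial_comp_perm]
  split
  · apply mul_le_mul_of_nonneg_left _ (Nat.cast_nonneg _)
    -- rewrite LHS product
    have h1 : (∏ j, p j ^ ((x ∘ σ) j)) = ∏ j, p (σ j) ^ x j := by
      rw [← Equiv.prod_comp σ (fun j => p (σ j) ^ x j)]
      refine Finset.prod_congr rfl fun m _ => ?_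
      simp only [Function.comp_apply]
      rw [hss m]
    rw [h1]
    have hai : a ∈ (Finset.univ : Finset (Fin k)) := Finset.mem_univ a
    have hii : i ∈ Finset.univ.erase a := Finset.mem_erase.mpr ⟨hia, Finset.mem_univ i⟩
    have e1 : ∀ f : Fin k → ℝ, (∏ j, f j) = f a * (f i * ∏ j ∈ (Finset.univ.erase a).erase i, f j) := by
      intro f
      rw [← Finset.mul_prod_erase _ f hai, ← Finset.mul_prod_erase _ f hii]
    rw [e1 (fun j => p (σ j) ^ x j), e1 (fun j => p j ^ x j)]
    have hrest : ∀ j ∈ (Finset.univ.erase a).erase i, p (σ j) ^ x j = p j ^ x j := by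
      intro j hj
      rw [Finset.mem_erase, Finset.mem_erase] at hj
      rw [hσ, Equiv.swap_apply_of_ne_of_ne hj.2.1 hj.1]
    rw [Finset.prod_congr rfl hrest]
    have hsa : σ a = i := Equiv.swap_apply_left a i
    have hsi : σ i = a := Equiv.swap_apply_right a i
    rw [hsa, hsi]
    have hR : (0:ℝ) ≤ ∏ j ∈ (Finset.univ.erase a).erase i, p j ^ x j :=
      Finset.prod_nonneg fun j _ => pow_nonneg (hp0 j) _
    have key : p a ^ x i * p i ^ x a ≤ p a ^ x a * p i ^ x i :=
      aux_pow (p a) (p i) (hp0 i) hpi (x a) (x i) hxi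
    calc p i ^ x a * (p a ^ x i * ∏ j ∈ (Finset.univ.erase a).erase i, p j ^ x j)
        = (p a ^ x i * p i ^ x a) * ∏ j ∈ (Finset.univ.erase a).erase i, p j ^ x j := by ring
      _ ≤ (p a ^ x a * p i ^ x i) * ∏ j ∈ (Finset.univ.erase a).erase i, p j ^ x j :=
          mul_le_mul_of_nonneg_right key hR
      _ = p a ^ x a * (p i ^ x i * ∏ j ∈ (Finset.univ.erase a).erase i, p j ^ x j) := by ring
  · exact le_refl 0

lemma mem_argmaxSet_comp {k : ℕ} (x : Fin k → ℕ) (σ : Equiv.Perm (Fin k)) (j : Fin k) :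
    j ∈ argmaxSet (x ∘ σ) ↔ σ j ∈ argmaxSet x := by
  simp only [argmaxSet, Finset.mem_filter, Finset.mem_univ, true_and, Function.comp]
  constructor
  · intro h n
    have := h (σ.symm n)
    simpa using this
  · intro h n
    exact h (σ n)

lemma card_argmaxSet_comp {k : ℕ} (x : Fin k → ℕ) (σ : Equiv.Perm (Fin k)) :
    (argmaxSet (x ∘ σ)).card = (argmaxSet x).card := by
  apply Finset.card_bij' (fun j _ => σ j) (fun j _ => σ.symm j)
  · intro j hj; exact (mem_argmaxSet_comp x σ j).mp hj
  · intro j hj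
    rw [mem_argmaxSet_comp, Equiv.apply_symm_apply]; exact hj
  · intro j _; simp
  · intro j _; simp

lemma main_aux {k : ℕ} (ℓ : ℕ) (p : Fin k → ℝ) (hp0 : ∀ j, 0 ≤ p j)
    (a i : Fin k) (hia : i ≠ a) (hpi : p i ≤ p a) :
    majProb ℓ p a - majProb ℓ p i ≥ strictMaxProb ℓ p a - strictMaxProb ℓ p i := by
  classical
  set s := Finset.Nat.antidiagonalTuple k ℓ with hs
  have hmult0 : ∀ x ∉ s, multPMF ℓ p x = 0 := by
    intro x hx
    rw [hs, Finset.Nat.mem_antidiagonalTuple] at hx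
    simp [multPMF, hx]
  have hmaj : ∀ j, majProb ℓ p j =
      ∑ x ∈ s, multPMF ℓ p x * (if j ∈ argmaxSet x then (1:ℝ)/(argmaxSet x).card else 0) := by
    intro j
    apply tsum_eq_sum
    intro x hx
    rw [hmult0 x hx, zero_mul]
  have hstrict : ∀ j, strictMaxProb ℓ p j =
      ∑ x ∈ s, (if ∀ m, m ≠ j → x m < x j then multPMF ℓ p x else 0) := by
    intro j
    apply tsum_eq_sum
    intro x hx
    split <;> simp [hmult0 x hx]
  set t : Fin k → (Fin k → ℕ) → ℝ := fun j x =>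
    if j ∈ argmaxSet x ∧ 2 ≤ (argmaxSet x).card then (1:ℝ)/(argmaxSet x).card else 0 with ht
  have hdec : ∀ j x, multPMF ℓ p x * (if j ∈ argmaxSet x then (1:ℝ)/(argmaxSet x).card else 0)
      - (if ∀ m, m ≠ j → x m < x j then multPMF ℓ p x else 0) = multPMF ℓ p x * t j x := by
    intro j x
    by_cases hst : ∀ m, m ≠ j → x m < x j
    · have hset : argmaxSet x = {j} := by
        ext m
        simp only [argmaxSet, Finset.mem_filter, Finset.mem_univ, true_and,
          Finset.mem_singleton]
        constructor
        · intro hm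
          by_contra hmj
          exact absurd (hm j) (not_le.mpr (hst m hmj))
        · intro hm n
          rw [hm]
          by_cases hn : n = j
          · subst hn; exact le_refl _
          · exact le_of_lt (hst n hn)
      rw [if_pos hst, ht]
      dsimp only
      rw [hset]
      norm_num
    · rw [if_neg hst]
      have hst' := hst
      push_neg at hst'
      obtain ⟨m, hmj, hm⟩ := hst'
      by_cases hj : j ∈ argmaxSet x
      · have hmax : ∀ n, x n ≤ x j := by
          intro n
          simpa [argmaxSet] using (Finset.mem_filter.mp hj).2 n
        have hmmem : m ∈ argmaxSet x := by
          simp only [argmaxSet, Finset.mem_filter, Finset.mem_univ, true_and]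
          intro n
          exact (hmax n).trans hm
        have hcard : 2 ≤ (argmaxSet x).card := by
          have hsub : ({m, j} : Finset (Fin k)) ⊆ argmaxSet x := by
            intro n hn
            rcases Finset.mem_insert.mp hn with rfl | hn
            · exact hmmem
            · rw [Finset.mem_singleton.mp hn]; exact hj
          have h2 : ({m, j} : Finset (Fin k)).card = 2 := by
            rw [Finset.card_insert_of_notMem (by simpa using hmj), Finset.card_singleton]
          rw [← h2]
          exact Finset.card_le_card hsub
        rw [ht]
        dsimp only
        rw [if_pos hj, if_pos ⟨hj, hcard⟩, sub_zero]
      · rw [ht]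
        dsimp only
        rw [if_neg hj, if_neg (fun h => hj h.1)]
        simp
    -- main inequality between the tie terms
  have htnonneg : ∀ j x, 0 ≤ t j x := by
    intro j x
    rw [ht]
    dsimp only
    split
    · positivity
    · exact le_refl 0
  set σ := Equiv.swap a i with hσ
  have hss : ∀ m, σ (σ m) = m := fun m => by rw [hσ]; exact Equiv.swap_apply_self a i m
  have hcomp : ∀ x : Fin k → ℕ, (x ∘ σ) ∘ σ = x := fun x =>
    funext fun m => congrArg x (hss m)
  have hteq : ∀ x, t i (x ∘ σ) = t a x := by
    intro x
    rw [ht]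
    dsimp only
    rw [card_argmaxSet_comp]
    have : i ∈ argmaxSet (x ∘ σ) ↔ a ∈ argmaxSet x := by
      rw [mem_argmaxSet_comp, hσ, Equiv.swap_apply_right]
    simp only [this]
  have hre : ∑ x ∈ s, multPMF ℓ p x * t i x = ∑ x ∈ s, multPMF ℓ p (x ∘ σ) * t i (x ∘ σ) := by
    apply Finset.sum_nbij' (i := fun x => x ∘ σ) (j := fun x => x ∘ σ)
    · intro x hx
      rw [hs, Finset.Nat.mem_antidiagonalTuple] at hx ⊢
      rw [← hx]
      exact Equiv.sum_comp σ x
    · intro x hx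
      rw [hs, Finset.Nat.mem_antidiagonalTuple] at hx ⊢
      rw [← hx]
      exact Equiv.sum_comp σ x
    · intro x _
      exact hcomp x
    · intro x _
      exact hcomp x
    · intro x _
      rw [hcomp x]
  have hpt : ∀ x, multPMF ℓ p (x ∘ σ) * t i (x ∘ σ) ≤ multPMF ℓ p x * t a x := by
    intro x
    rw [hteq x]
    by_cases ha : a ∈ argmaxSet x ∧ 2 ≤ (argmaxSet x).card
    · have hxa : x i ≤ x a := by
        have := (Finset.mem_filter.mp ha.1).2
        simpa [argmaxSet] using this i
      exact mul_le_mul_of_nonneg_right (multPMF_swap_le p hp0 a i hia hpi x hxa)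
        (htnonneg a x)
    · rw [ht]
      dsimp only
      rw [if_neg ha]
      simp
  have key : ∑ x ∈ s, multPMF ℓ p x * t i x ≤ ∑ x ∈ s, multPMF ℓ p x * t a x := by
    rw [hre]
    exact Finset.sum_le_sum fun x _ => hpt x
  have hrw : ∀ j, majProb ℓ p j - strictMaxProb ℓ p j = ∑ x ∈ s, multPMF ℓ p x * t j x := by
    intro j
    rw [hmaj j, hstrict j, ← Finset.sum_sub_distrib]
    exact Finset.sum_congr rfl fun x _ => hdec j x
  have h1 := hrw a
  have h2 := hrw i
  linarith
/-- **Ties do not help the wrong opinion.** For a multinomial sample with `ℓ`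
trials and probability vector `p` with `p_1 ≥ p_i`,
`Pr(maj_ℓ = 1) - Pr(maj_ℓ = i) ≥ Pr(X_1 > X_j ∀ j ≠ 1) - Pr(X_i > X_j ∀ j ≠ i)`. -/
theorem majority_prob_diff_ge_strict (k ℓ : ℕ) (hk : 2 ≤ k) (hℓ : 1 ≤ ℓ)
    (p : Fin k → ℝ) (hp0 : ∀ j, 0 ≤ p j) (hp1 : ∑ j, p j = 1)
    (i : Fin k) (hi : i ≠ ⟨0, by omega⟩)
    (hpi : p i ≤ p ⟨0, by omega⟩) :
    majProb ℓ p ⟨0, by omega⟩ - majProb ℓ p i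
      ≥ strictMaxProb ℓ p ⟨0, by omega⟩ - strictMaxProb ℓ p i := by
  exact main_aux ℓ p hp0 _ i hi hpi
end

section
/- (Poisson approximation for colored balls into bins, expectation form.) Fix integers n ≥ 1, k ≥ 1 and h_1,…,h_k ≥ 1. On a probability space, for each color i ∈ {1,…,k} let the h_i balls of color i be thrown independently and uniformly at random into n bins (all throws across all colors mutually independent), and let X_{u,i} be the number of balls of color i landing in bin u. Independently, let Y_{u,i} (u ∈ {1,…,n}, i ∈ {1,…,k}) be mutually independent random variables with Y_{u,i} distributed Poisson(h_i/n), and let Z_1,…,Z_n be integer-valued random variables independent of all the X_{u,i} and of all the Y_{u,i}. Then for every nonnegative function f of the counts and of z_1,…,z_n, E[f((X_{u,i})_{u,i}, Z_1,…,Z_n)] ≤ e^k·√(∏_{i=1}^k h_i)·E[f((Y_{u,i})_{u,i}, Z_1,…,Z_n)]. -/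
/-!
For a single color with `m` balls, the bin counts `v` (with `∑ v = m`) have probability
`m! / ∏ v_u! · n^(-m)`, while independent `Poisson(m/n)` variables take the values `v` with
probability `e^(-m) m^m / ∏ v_u! · n^(-m)`. The ratio `m! e^m / m^m` is at most `e √m` by the
monotonicity of the Stirling sequence. Colors are independent on both sides, so the law of `X`
is pointwise at most `e^k √(∏ h_i)` times the law of `Y`; since `Z` is independent of both, the
same holds for the joint laws with `Z`, and integrating a nonnegative `f` against these discrete
laws gives the claim.
-/

open MeasureTheory ProbabilityTheory
open scoped ENNReal

open Finset Real

open MvPolynomial in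
/-- Both sides are the coefficient of `∏ u, X u ^ v u` in `(∑ u, X u) ^ Fintype.card α`. -/
theorem card_filter_card_fiber_eq {α β : Type*} [Fintype α] [DecidableEq α] [Fintype β]
    [DecidableEq β] (v : β → ℕ) [DecidablePred fun g : α → β => ∀ u, #{a | g a = u} = v u] :
    #{g : α → β | ∀ u, #{a | g a = u} = v u} =
      if ∑ u, v u = Fintype.card α then Nat.multinomial univ v else 0 := by
  have hexpand : (∑ u, X u : MvPolynomial β ℕ) ^ Fintype.card α
      = ∑ g : α → β, ∏ u, X u ^ #{a | g a = u} := by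
    rw [← card_univ, ← prod_const, prod_univ_sum, Fintype.piFinset_univ]
    refine sum_congr rfl fun g _ => ?_
    simp_rw [← prod_const]
    exact (prod_fiberwise' _ _ _).symm
  have hcoeff := coeff_sum_X_pow_of_fintype (R := ℕ) (Finsupp.equivFunOnFinite.symm v)
    (Fintype.card α)
  rw [hexpand, coeff_sum] at hcoeff
  simp only [coeff_prod_X_pow, sum_boole, Nat.cast_id] at hcoeff
  rw [Finsupp.multinomial_eq_of_support_subset (subset_univ _),
    Finsupp.sum_fintype _ _ fun _ => rfl, Finsupp.coe_equivFunOnFinite_symm] at hcoeff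
  convert hcoeff using 2
  simp [Finsupp.ext_iff, eq_comm]

theorem card_filter_sigma_eq_prod {ι β : Type*} {κ : ι → Type*} [Fintype ι] [DecidableEq ι]
    [∀ i, Fintype (κ i)] [∀ i, DecidableEq (κ i)] [Fintype β] [DecidableEq β]
    (p : ∀ i, (κ i → β) → Prop) [∀ i, DecidablePred (p i)]
    [DecidablePred fun g : (Σ i, κ i) → β => ∀ i, p i fun b => g ⟨i, b⟩] :
    #{g : (Σ i, κ i) → β | ∀ i, p i fun b => g ⟨i, b⟩} = ∏ i, #{g : κ i → β | p i g} := by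
  simp only [← Fintype.card_subtype]
  rw [← Fintype.card_pi]
  exact Fintype.card_congr
    (((Equiv.piCurry fun _ _ => β).subtypeEquiv fun _ => Iff.rfl).trans Equiv.subtypePiEquivPi)

theorem factorial_le_exp_one_mul_sqrt_mul_pow {m : ℕ} (hm : m ≠ 0) :
    (m.factorial : ℝ) ≤ exp 1 * √m * (m / exp 1) ^ m := by
  have hseq : Stirling.stirlingSeq m ≤ exp 1 / √2 := by
    obtain ⟨j, rfl⟩ := Nat.exists_eq_add_of_le' (Nat.one_le_iff_ne_zero.mpr hm)
    rw [← Stirling.stirlingSeq_one]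
    exact Stirling.stirlingSeq'_antitone (Nat.zero_le j)
  rw [Stirling.stirlingSeq, div_le_iff₀ (by positivity)] at hseq
  calc (m.factorial : ℝ) ≤ exp 1 / √2 * (√(2 * m) * (m / exp 1) ^ m) := hseq
    _ = exp 1 * √m * (m / exp 1) ^ m := by
      rw [sqrt_mul zero_le_two]
      field_simp

theorem multinomial_mul_inv_pow_le {n m : ℕ} (hm : m ≠ 0) (v : Fin n → ℕ)
    (hv : ∑ u, v u = m) :
    (Nat.multinomial univ v : ℝ) * ((n : ℝ)⁻¹) ^ m ≤
      exp 1 * √m * ∏ u, exp (-(m / n)) * (m / n) ^ v u / (v u).factorial := by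
  have hn : (n : ℝ) ≠ 0 := Nat.cast_ne_zero.mpr <| by
    rintro rfl
    simp [← hv] at hm
  have hP : (0 : ℝ) < ∏ u, ((v u).factorial : ℝ) := by positivity
  have hmultinomial :
      (Nat.multinomial univ v : ℝ) = m.factorial / ∏ u, ((v u).factorial : ℝ) := by
    rw [eq_div_iff hP.ne', mul_comm, ← hv]
    exact_mod_cast Nat.multinomial_spec univ v
  have hpoisson : ∏ u, exp (-(m / n)) * ((m : ℝ) / n) ^ v u / (v u).factorial
      = exp (-m) * (m / n) ^ m / ∏ u, ((v u).factorial : ℝ) := by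
    rw [prod_div_distrib, prod_mul_distrib, prod_const, prod_pow_eq_pow_sum, hv, ← exp_nsmul,
      card_univ, Fintype.card_fin, nsmul_eq_mul]
    field_simp
  have hstirling := factorial_le_exp_one_mul_sqrt_mul_pow hm
  rw [div_pow, exp_one_pow, div_eq_mul_inv, ← exp_neg] at hstirling
  rw [hmultinomial, hpoisson, div_mul_eq_mul_div, ← mul_div_assoc, div_le_div_iff_of_pos_right hP]
  calc (m.factorial : ℝ) * (n : ℝ)⁻¹ ^ m
      ≤ (exp 1 * √m * ((m : ℝ) ^ m * exp (-m))) * (n : ℝ)⁻¹ ^ m :=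
        mul_le_mul_of_nonneg_right hstirling (by positivity)
    _ = _ := by ring

theorem card_filter_card_fiber_mul_inv_pow_le {n m : ℕ} (hm : m ≠ 0) (v : Fin n → ℕ) :
    (#{g : Fin m → Fin n | ∀ u, #{b | g b = u} = v u} : ℝ≥0∞) * ((n : ℝ≥0∞)⁻¹) ^ m ≤
      ENNReal.ofReal (exp 1 * √m) *
        ∏ u, ENNReal.ofReal (exp (-(m / n)) * (m / n) ^ v u / (v u).factorial) := by
  rw [card_filter_card_fiber_eq, Fintype.card_fin]
  split_ifs with hv
  · have hn : (0 : ℝ) < n := Nat.cast_pos.mpr <| Nat.pos_of_ne_zero <| by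
      rintro rfl
      simp [← hv] at hm
    rw [← ENNReal.ofReal_prod_of_nonneg fun u _ => by positivity,
      ← ENNReal.ofReal_mul (by positivity), ← ENNReal.ofReal_natCast, ← ENNReal.ofReal_natCast n,
      ← ENNReal.ofReal_inv_of_pos hn, ← ENNReal.ofReal_pow (by positivity),
      ← ENNReal.ofReal_mul (by positivity)]
    exact ENNReal.ofReal_le_ofReal (multinomial_mul_inv_pow_le hm v hv)
  · simp

theorem exp_card_mul_sqrt_prod {ι : Type*} [Fintype ι] (h : ι → ℕ) :
    ENNReal.ofReal (exp (Fintype.card ι) * √(∏ i, (h i : ℝ))) =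
      ∏ i, ENNReal.ofReal (exp 1 * √(h i)) := by
  rw [← ENNReal.ofReal_prod_of_nonneg fun i _ => by positivity, prod_mul_distrib,
    sqrt_prod _ fun i _ => by positivity, prod_const, exp_one_pow, card_univ]

section Probability

variable {Ω : Type*} [MeasurableSpace Ω] {μ : Measure Ω}

theorem ProbabilityTheory.iIndepFun.measure_forall_eq {ι : Type*} [Fintype ι] {β : ι → Type*}
    [∀ i, MeasurableSpace (β i)] [∀ i, MeasurableSingletonClass (β i)] {B : ∀ i, Ω → β i}
    (hB : iIndepFun B μ) (x : ∀ i, β i) :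
    μ {ω | ∀ i, B i ω = x i} = ∏ i, μ {ω | B i ω = x i} := by
  rw [← hB.meas_iInter (s := fun i => {ω | B i ω = x i})
    fun i => ⟨{x i}, measurableSet_singleton _, rfl⟩, Set.iInter_ofPred]

theorem measure_preimage_finset_eq_card_mul {α : Type*} [MeasurableSpace α]
    [MeasurableSingletonClass α] {V : Ω → α} (hV : Measurable V) {c : ℝ≥0∞}
    (hc : ∀ a, μ (V ⁻¹' {a}) = c) (s : Finset α) :
    μ (V ⁻¹' s) = #s * c := by
  rw [← sum_measure_preimage_singleton s fun a _ => hV (measurableSet_singleton a)]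
  simp [hc]

theorem lintegral_comp_le_mul_of_measure_preimage_singleton_le {α : Type*} [MeasurableSpace α]
    [Countable α] [MeasurableSingletonClass α] {U V : Ω → α} (hU : Measurable U)
    (hV : Measurable V) {C : ℝ≥0∞} (hUV : ∀ a, μ (U ⁻¹' {a}) ≤ C * μ (V ⁻¹' {a}))
    (f : α → ℝ≥0∞) :
    ∫⁻ ω, f (U ω) ∂μ ≤ C * ∫⁻ ω, f (V ω) ∂μ := by
  rw [← lintegral_map (measurable_of_countable f) hU,
    ← lintegral_map (measurable_of_countable f) hV, lintegral_countable', lintegral_countable',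
    ← ENNReal.tsum_mul_left]
  refine ENNReal.tsum_le_tsum fun a => ?_
  rw [Measure.map_apply hU (measurableSet_singleton a),
    Measure.map_apply hV (measurableSet_singleton a), mul_left_comm]
  exact mul_le_mul_right (hUV a) _

theorem lintegral_le_mul_of_indepFun {α γ : Type*} [MeasurableSpace α] [Countable α]
    [MeasurableSingletonClass α] [MeasurableSpace γ] [Countable γ] [MeasurableSingletonClass γ]
    {U V : Ω → α} {W : Ω → γ} (hU : Measurable U) (hV : Measurable V) (hW : Measurable W)
    (hUW : IndepFun U W μ) (hVW : IndepFun V W μ) {C : ℝ≥0∞}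
    (hUV : ∀ a, μ (U ⁻¹' {a}) ≤ C * μ (V ⁻¹' {a})) (f : α → γ → ℝ≥0∞) :
    ∫⁻ ω, f (U ω) (W ω) ∂μ ≤ C * ∫⁻ ω, f (V ω) (W ω) ∂μ := by
  refine lintegral_comp_le_mul_of_measure_preimage_singleton_le (hU.prodMk hW) (hV.prodMk hW)
    (fun ⟨a, z⟩ => ?_) (Function.uncurry f)
  rw [← Set.singleton_prod_singleton, Set.mk_preimage_prod, Set.mk_preimage_prod,
    hUW.measure_inter_preimage_eq_mul _ _ (measurableSet_singleton a) (measurableSet_singleton z),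
    hVW.measure_inter_preimage_eq_mul _ _ (measurableSet_singleton a) (measurableSet_singleton z),
    ← mul_assoc]
  exact mul_le_mul_left (hUV a) _

end Probability

section BallsIntoBins

variable {Ω ι : Type*} [MeasurableSpace Ω] {μ : Measure Ω} [Fintype ι] {n : ℕ} {h : ι → ℕ}

theorem measure_forall_card_fiber_eq [DecidableEq ι] {B : (Σ i, Fin (h i)) → Ω → Fin n}
    (hBmeas : ∀ b, Measurable (B b)) (hBunif : ∀ b v, μ {ω | B b ω = v} = (n : ℝ≥0∞)⁻¹)
    (hBindep : iIndepFun B μ) (a : Fin n → ι → ℕ) :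
    μ {ω | ∀ u i, #{b : Fin (h i) | B ⟨i, b⟩ ω = u} = a u i} =
      ∏ i, #{g : Fin (h i) → Fin n | ∀ u, #{b | g b = u} = a u i} * ((n : ℝ≥0∞)⁻¹) ^ h i := by
  have hBv : Measurable fun ω b => B b ω := measurable_pi_lambda _ hBmeas
  have hatom : ∀ g, μ ((fun ω b => B b ω) ⁻¹' {g}) = ((n : ℝ≥0∞)⁻¹) ^ ∑ i, h i := by
    intro g
    have hprod := hBindep.measure_forall_eq g
    simp only [hBunif, prod_const, card_univ, Fintype.card_sigma, Fintype.card_fin] at hprod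
    rw [← hprod]
    congr 1
    ext ω
    simp [funext_iff]
  calc μ {ω | ∀ u i, #{b : Fin (h i) | B ⟨i, b⟩ ω = u} = a u i}
      = μ ((fun ω b => B b ω) ⁻¹' ↑({g : (Σ i, Fin (h i)) → Fin n |
          ∀ i, ∀ u, #{b | g ⟨i, b⟩ = u} = a u i} : Finset _)) := by
        congr 1
        ext ω
        simpa using forall_comm
    _ = _ := by
        rw [measure_preimage_finset_eq_card_mul hBv hatom, card_filter_sigma_eq_prod
          (fun i g => ∀ u, #{b | g b = u} = a u i), Nat.cast_prod, ← prod_pow_eq_pow_sum,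
          ← prod_mul_distrib]

theorem measure_forall_eq_poisson {Y : Fin n → ι → Ω → ℕ}
    (hYpois : ∀ u i a, μ {ω | Y u i ω = a} =
      ENNReal.ofReal (exp (-((h i : ℝ) / n)) * ((h i : ℝ) / n) ^ a / a.factorial))
    (hYindep : iIndepFun (fun ui : Fin n × ι => Y ui.1 ui.2) μ) (a : Fin n → ι → ℕ) :
    μ {ω | ∀ u i, Y u i ω = a u i} = ∏ i, ∏ u,
      ENNReal.ofReal (exp (-((h i : ℝ) / n)) * ((h i : ℝ) / n) ^ a u i / (a u i).factorial) := by
  have hprod := hYindep.measure_forall_eq fun ui => a ui.1 ui.2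
  simp only [Prod.forall, hYpois, Fintype.prod_prod_type] at hprod
  rw [hprod, prod_comm]

theorem measure_forall_card_fiber_le [DecidableEq ι] {B : (Σ i, Fin (h i)) → Ω → Fin n}
    {Y : Fin n → ι → Ω → ℕ} (hh : ∀ i, 1 ≤ h i) (hBmeas : ∀ b, Measurable (B b))
    (hBunif : ∀ b v, μ {ω | B b ω = v} = (n : ℝ≥0∞)⁻¹) (hBindep : iIndepFun B μ)
    (hYpois : ∀ u i a, μ {ω | Y u i ω = a} =
      ENNReal.ofReal (exp (-((h i : ℝ) / n)) * ((h i : ℝ) / n) ^ a / a.factorial))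
    (hYindep : iIndepFun (fun ui : Fin n × ι => Y ui.1 ui.2) μ) (a : Fin n → ι → ℕ) :
    μ {ω | ∀ u i, #{b : Fin (h i) | B ⟨i, b⟩ ω = u} = a u i} ≤
      (∏ i, ENNReal.ofReal (exp 1 * √(h i))) * μ {ω | ∀ u i, Y u i ω = a u i} := by
  rw [measure_forall_card_fiber_eq hBmeas hBunif hBindep,
    measure_forall_eq_poisson hYpois hYindep, ← prod_mul_distrib]
  exact prod_le_prod' fun i _ =>
    card_filter_card_fiber_mul_inv_pow_le (Nat.one_le_iff_ne_zero.mp (hh i)) fun u => a u i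

end BallsIntoBins

theorem poisson_approximation_expectation_general
    (n k : ℕ) (h : Fin k → ℕ) (hh : ∀ i, 1 ≤ h i)
    {Ω : Type} [MeasurableSpace Ω] (μ : Measure Ω)
    (B : (Σ i : Fin k, Fin (h i)) → Ω → Fin n)
    (Y : Fin n → Fin k → Ω → ℕ) (Z : Fin n → Ω → ℤ)
    (hBmeas : ∀ b, Measurable (B b))
    (hYmeas : ∀ u i, Measurable (Y u i))
    (hZmeas : ∀ u, Measurable (Z u))
    (hBunif : ∀ b v, μ {ω | B b ω = v} = (n : ℝ≥0∞)⁻¹)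
    (hBindep : iIndepFun B μ)
    (hYpois : ∀ u i a, μ {ω | Y u i ω = a} =
      ENNReal.ofReal (Real.exp (-((h i : ℝ) / n)) * ((h i : ℝ) / n) ^ a / a.factorial))
    (hYindep : iIndepFun
      (fun ui : Fin n × Fin k => Y ui.1 ui.2) μ)
    (hZindep : IndepFun
      (fun ω => ((fun b => B b ω), (fun ui : Fin n × Fin k => Y ui.1 ui.2 ω)))
      (fun ω u => Z u ω) μ)
    (X : Fin n → Fin k → Ω → ℕ)
    (hX : ∀ u i ω, X u i ω =
      (Finset.univ.filter fun b : Fin (h i) => B ⟨i, b⟩ ω = u).card)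
    (f : (Fin n → Fin k → ℕ) → (Fin n → ℤ) → ℝ≥0∞) :
    ∫⁻ ω, f (fun u i => X u i ω) (fun u => Z u ω) ∂μ
      ≤ ENNReal.ofReal (Real.exp k * Real.sqrt (∏ i, (h i : ℝ))) *
        ∫⁻ ω, f (fun u i => Y u i ω) (fun u => Z u ω) ∂μ := by
  have hXcounts : (fun ω u i => X u i ω) =
      (fun g : (Σ i, Fin (h i)) → Fin n => fun u i => #{b | g ⟨i, b⟩ = u}) ∘ fun ω b => B b ω := by
    ext ω u i
    exact hX u i ω
  have hXmeas : Measurable fun ω u i => X u i ω := by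
    rw [hXcounts]
    exact (measurable_of_countable _).comp (measurable_pi_lambda _ hBmeas)
  have hXZ : IndepFun (fun ω u i => X u i ω) (fun ω u => Z u ω) μ := by
    rw [hXcounts]
    exact hZindep.comp (measurable_of_countable fun p : ((Σ i, Fin (h i)) → Fin n) × _ =>
      fun u i => #{b | p.1 ⟨i, b⟩ = u}) measurable_id
  have hYZ : IndepFun (fun ω u i => Y u i ω) (fun ω u => Z u ω) μ :=
    hZindep.comp (measurable_of_countable
      fun p : ((Σ i, Fin (h i)) → Fin n) × (Fin n × Fin k → ℕ) => fun u i => p.2 (u, i))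
      measurable_id
  have hC := exp_card_mul_sqrt_prod h
  rw [Fintype.card_fin] at hC
  rw [hC]
  refine lintegral_le_mul_of_indepFun hXmeas (by fun_prop) (by fun_prop) hXZ hYZ (fun a => ?_) f
  have hpreimage : ∀ V : Fin n → Fin k → Ω → ℕ,
      (fun ω u i => V u i ω) ⁻¹' {a} = {ω | ∀ u i, V u i ω = a u i} := fun V => by
    ext ω
    simp [funext_iff]
  simp only [hpreimage, hX]
  exact measure_forall_card_fiber_le hh hBmeas hBunif hBindep hYpois hYindep a

/-- **Poisson approximation for colored balls into bins (expectation form).**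
For each color `i ∈ {1,…,k}`, `h i` balls of color `i` are thrown independently
and uniformly at random into `n` bins (`B b` is the bin of ball `b`, all throws
mutually independent), and `X u i` counts the color-`i` balls in bin `u`.
Independently, `Y u i` are mutually independent `Poisson(h i / n)` variables, and
`Z_1, …, Z_n` are integer-valued variables independent of all the `X u i` and
all the `Y u i`. Then for every nonnegative function `f` of the counts and of
`z_1, …, z_n`,
`E[f(X, Z)] ≤ e^k √(∏ i, h i) E[f(Y, Z)]`. -/
theorem poisson_approximation_expectation
    (n k : ℕ) (hn : 1 ≤ n) (hk : 1 ≤ k) (h : Fin k → ℕ) (hh : ∀ i, 1 ≤ h i)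
    {Ω : Type} [MeasurableSpace Ω] (μ : Measure Ω) [IsProbabilityMeasure μ]
    (B : (Σ i : Fin k, Fin (h i)) → Ω → Fin n)
    (Y : Fin n → Fin k → Ω → ℕ) (Z : Fin n → Ω → ℤ)
    (hBmeas : ∀ b, Measurable (B b))
    (hYmeas : ∀ u i, Measurable (Y u i))
    (hZmeas : ∀ u, Measurable (Z u))
    (hBunif : ∀ b v, μ {ω | B b ω = v} = (n : ℝ≥0∞)⁻¹)
    (hBindep : iIndepFun B μ)
    (hYpois : ∀ u i a, μ {ω | Y u i ω = a} =
      ENNReal.ofReal (Real.exp (-((h i : ℝ) / n)) * ((h i : ℝ) / n) ^ a / a.factorial))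
    (hYindep : iIndepFun
      (fun ui : Fin n × Fin k => Y ui.1 ui.2) μ)
    (hBY : IndepFun (fun ω b => B b ω)
      (fun ω (ui : Fin n × Fin k) => Y ui.1 ui.2 ω) μ)
    (hZindep : IndepFun
      (fun ω => ((fun b => B b ω), (fun ui : Fin n × Fin k => Y ui.1 ui.2 ω)))
      (fun ω u => Z u ω) μ)
    (X : Fin n → Fin k → Ω → ℕ)
    (hX : ∀ u i ω, X u i ω =
      (Finset.univ.filter fun b : Fin (h i) => B ⟨i, b⟩ ω = u).card)
    (f : (Fin n → Fin k → ℕ) → (Fin n → ℤ) → ℝ≥0∞) :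
    ∫⁻ ω, f (fun u i => X u i ω) (fun u => Z u ω) ∂μ
      ≤ ENNReal.ofReal (Real.exp k * Real.sqrt (∏ i, (h i : ℝ))) *
        ∫⁻ ω, f (fun u i => Y u i ω) (fun u => Z u ω) ∂μ :=
  poisson_approximation_expectation_general n k h hh μ B Y Z hBmeas hYmeas hZmeas hBunif hBindep
    hYpois hYindep hZindep X hX f
end

section
/- The function g(x,y), defined for x ∈ [0,1] and y ∈ [1,∞) by g(x,y) = x·(1−x²)^{(y−1)/2} if x < 1/√y and g(x,y) = (1/√y)·(1−1/y)^{(y−1)/2} if x ≥ 1/√y, is non-decreasing in x (for each fixed y) and non-increasing in y (for each fixed x). -/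
open Real Set

noncomputable def gBranch (y x : ℝ) : ℝ := x * (1 - x ^ 2) ^ ((y - 1) / 2)

lemma g_eq_gBranch_min {y : ℝ} (hy : 0 ≤ y) (x : ℝ) : g x y = gBranch y (min x (1 / √y)) := by
  unfold g gBranch
  split_ifs with h
  · rw [min_eq_left h.le]
  · rw [min_eq_right (not_lt.mp h), div_pow, one_pow, sq_sqrt hy]

lemma continuous_gBranch {y : ℝ} (hy : 1 ≤ y) : Continuous (gBranch y) :=
  continuous_id.mul <| (continuous_const.sub (continuous_pow 2)).rpow_const
    fun _ => Or.inr (by linarith)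

lemma hasDerivAt_gBranch (y : ℝ) {x : ℝ} (hx : 1 - x ^ 2 ≠ 0) :
    HasDerivAt (gBranch y) ((1 - x ^ 2) ^ ((y - 1) / 2) * (1 - y * x ^ 2) / (1 - x ^ 2)) x := by
  have hpow := ((hasDerivAt_pow 2 x).const_sub 1).rpow_const (p := (y - 1) / 2) (Or.inl hx)
  refine ((hasDerivAt_id x).mul hpow).congr_deriv ?_
  rw [id_eq, rpow_sub_one hx]
  field_simp
  ring

lemma gBranch_monotoneOn {y : ℝ} (hy : 1 ≤ y) : MonotoneOn (gBranch y) (Icc 0 (1 / √y)) := by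
  have hyx : ∀ x ∈ interior (Icc 0 (1 / √y)), 0 < x ∧ y * x ^ 2 < 1 := by
    intro x hx
    rw [interior_Icc] at hx
    have := pow_lt_pow_left₀ hx.2 hx.1.le two_ne_zero
    rw [div_pow, one_pow, sq_sqrt (by linarith), lt_div_iff₀ (by linarith), mul_comm] at this
    exact ⟨hx.1, this⟩
  have hbase : ∀ x ∈ interior (Icc 0 (1 / √y)), 0 < 1 - x ^ 2 := fun x hx => by
    nlinarith [hyx x hx]
  refine monotoneOn_of_hasDerivWithinAt_nonneg (convex_Icc _ _)
    (continuous_gBranch hy).continuousOn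
    (fun x hx => (hasDerivAt_gBranch y (hbase x hx).ne').hasDerivWithinAt) fun x hx => ?_
  exact div_nonneg (mul_nonneg (rpow_nonneg (hbase x hx).le _) (by linarith [hyx x hx]))
    (hbase x hx).le

lemma gBranch_le_gBranch_of_le {x y y' : ℝ} (hx0 : 0 ≤ x) (hx1 : x ≤ 1) (hy : 1 ≤ y)
    (hyy' : y ≤ y') : gBranch y' x ≤ gBranch y x :=
  mul_le_mul_of_nonneg_left (rpow_le_rpow_of_exponent_ge' (by nlinarith) (by nlinarith)
    (by linarith) (by linarith)) hx0

/-- On `x ∈ [0,1]`, `y ∈ [1,∞)`, the function `g` is non-decreasing in `x`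
(for each fixed `y`) and non-increasing in `y` (for each fixed `x`). -/
theorem g_monotone :
    (∀ y : ℝ, 1 ≤ y → ∀ x x' : ℝ, 0 ≤ x → x ≤ x' → x' ≤ 1 → g x y ≤ g x' y) ∧
    (∀ x : ℝ, 0 ≤ x → x ≤ 1 → ∀ y y' : ℝ, 1 ≤ y → y ≤ y' → g x y' ≤ g x y) := by
  have min_mem {x c : ℝ} (hx : 0 ≤ x) (hc : 0 ≤ c) : min x c ∈ Icc 0 c :=
    ⟨le_min hx hc, min_le_right x c⟩
  constructor
  · intro y hy x x' hx hxx' _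
    rw [g_eq_gBranch_min (by linarith), g_eq_gBranch_min (by linarith)]
    exact gBranch_monotoneOn hy (min_mem hx (by positivity))
      (min_mem (hx.trans hxx') (by positivity)) (min_le_min_right _ hxx')
  · intro x hx0 hx1 y y' hy hyy'
    have hc : 1 / √y' ≤ 1 / √y := one_div_le_one_div_of_le (by positivity) (sqrt_le_sqrt hyy')
    calc g x y' = gBranch y' (min x (1 / √y')) := g_eq_gBranch_min (by linarith) x
      _ ≤ gBranch y (min x (1 / √y')) :=
        gBranch_le_gBranch_of_le (by positivity) ((min_le_left _ _).trans hx1) hy hyy'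
      _ ≤ gBranch y (min x (1 / √y)) :=
        gBranch_monotoneOn hy ⟨by positivity, (min_le_right _ _).trans hc⟩
          (min_mem hx0 (by positivity)) (min_le_min_left _ hc)
      _ = g x y := (g_eq_gBranch_min (by linarith) x).symm
end

section
/- Let k ≥ 2 be an integer and let P be a k×k matrix with P_{i,i} = p for all i and q_l ≤ P_{i,j} ≤ q_u for all i ≠ j, where 0 ≤ q_l ≤ q_u ≤ p. Then for every index m, every real δ > 0, and every probability vector c with c_m − c_i ≥ δ for all i ≠ m, one has (c·P)_m − (c·P)_i ≥ (p − q_u)·δ − (q_u − q_l) for all i ≠ m. Consequently, if in addition (p − q_u)·δ/2 ≥ q_u − q_l, then (c·P)_m − (c·P)_i ≥ ((p − q_u)/2)·δ for all i ≠ m, i.e., P is ((p − q_u)/2, δ)-majority-preserving with respect to m (with non-strict inequality). -/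
open scoped BigOperators

/-- A noise matrix with diagonal entries `p` and off-diagonal entries in `[q_l, q_u]`
loses at most `(q_u - q_l)` of the bias: for every `δ`-biased probability vector `c`,
`(c·P)_m - (c·P)_i ≥ (p - q_u) δ - (q_u - q_l)`; in particular, if
`(p - q_u) δ/2 ≥ q_u - q_l`, then `(c·P)_m - (c·P)_i ≥ ((p - q_u)/2) δ`,
i.e. `P` is `((p - q_u)/2, δ)`-majority-preserving w.r.t. `m` (non-strictly). -/
theorem bounded_noise_matrix_majority_preserving
    (k : ℕ) (hk : 2 ≤ k) (P : Matrix (Fin k) (Fin k) ℝ) (p ql qu : ℝ)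
    (hql : 0 ≤ ql) (hqlu : ql ≤ qu) (hqup : qu ≤ p)
    (hPdiag : ∀ i, P i i = p)
    (hPoff : ∀ i j, i ≠ j → ql ≤ P i j ∧ P i j ≤ qu)
    (m : Fin k) (δ : ℝ) (hδ : 0 < δ)
    (c : Fin k → ℝ) (hc0 : ∀ j, 0 ≤ c j) (hc1 : ∑ j, c j = 1)
    (hbias : ∀ i, i ≠ m → c m - c i ≥ δ) :
    (∀ i, i ≠ m →
      (∑ j, c j * P j m) - (∑ j, c j * P j i) ≥ (p - qu) * δ - (qu - ql)) ∧
    ((p - qu) * δ / 2 ≥ qu - ql → ∀ i, i ≠ m →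
      (∑ j, c j * P j m) - (∑ j, c j * P j i) ≥ (p - qu) / 2 * δ) := by
  have hcm1 : c m ≤ 1 := by
    rw [← hc1]
    exact Finset.single_le_sum (fun j _ => hc0 j) (Finset.mem_univ m)
  have key : ∀ i, i ≠ m →
      (∑ j, c j * P j m) - (∑ j, c j * P j i) ≥ (p - qu) * δ - (qu - ql) := by
    intro i hi
    have hdiff : (∑ j, c j * P j m) - (∑ j, c j * P j i)
        = ∑ j, c j * (P j m - P j i) := by
      rw [← Finset.sum_sub_distrib]
      exact Finset.sum_congr rfl (fun j _ => by ring)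
    have hterm : ∀ j ∈ Finset.univ,
        c j * (ql - qu) + ((if j = m then c m * (p - ql) else 0)
          + (if j = i then c i * (qu - p) else 0)) ≤ c j * (P j m - P j i) := by
      intro j _
      by_cases hjm : j = m
      · subst hjm
        have him : ¬ (j = i) := fun h => hi h.symm
        rw [if_pos rfl, if_neg him]
        have h1 := (hPoff j i him).2
        have h2 := hPdiag j
        nlinarith [hc0 j]
      · by_cases hji : j = i
        · subst hji
          rw [if_neg hjm, if_pos rfl]
          have h1 := (hPoff j m hjm).1
          have h2 := hPdiag j
          nlinarith [hc0 j]
        · rw [if_neg hjm, if_neg hji]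
          have h1 := (hPoff j m hjm).1
          have h2 := (hPoff j i hji).2
          nlinarith [hc0 j]
    have hsum := Finset.sum_le_sum hterm
    rw [Finset.sum_add_distrib, Finset.sum_add_distrib, ← Finset.sum_mul, hc1,
      Finset.sum_ite_eq' Finset.univ m (fun _ => c m * (p - ql)),
      Finset.sum_ite_eq' Finset.univ i (fun _ => c i * (qu - p))] at hsum
    simp only [Finset.mem_univ, if_pos] at hsum
    rw [hdiff]
    have hb := hbias i hi
    nlinarith [hc0 i]
  refine ⟨key, fun hcond i hi => ?_⟩
  have := key i hi
  linarith
end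

section
/- (A diagonally dominant noise matrix need not preserve the majority.) Let ε, δ be reals with 0 < ε < 1/6 and 0 < δ < 1/6, let P be the 3×3 matrix with rows (1/2+ε, 0, 1/2−ε), (1/2−ε, 1/2+ε, 0), (0, 1/2−ε, 1/2+ε), and let c be the probability vector (1/2+δ, 1/2−δ, 0). Then c is δ-biased toward opinion 1 (i.e., c_1 − c_i ≥ δ for i = 2, 3), yet (P·c)_1 < (P·c)_2; in particular, opinion 1 is no longer the (strict) plurality of P·c. -/
/-- **A diagonally dominant noise matrix need not preserve the majority.**
For `0 < ε < 1/6` and `0 < δ < 1/6`, the probability vector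
`c = (1/2+δ, 1/2-δ, 0)` is `δ`-biased toward opinion `1`, yet
`(P·c)_1 < (P·c)_2` for the diagonally dominant matrix `P` below. -/
theorem diagonally_dominant_not_majority_preserving
    (ε δ : ℝ) (hε0 : 0 < ε) (hε : ε < 1 / 6) (hδ0 : 0 < δ) (hδ : δ < 1 / 6) :
    let P : Matrix (Fin 3) (Fin 3) ℝ :=
      !![1/2 + ε, 0, 1/2 - ε;
         1/2 - ε, 1/2 + ε, 0;
         0, 1/2 - ε, 1/2 + ε]
    let c : Fin 3 → ℝ := ![1/2 + δ, 1/2 - δ, 0]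
    (∀ i, i ≠ 0 → c 0 - c i ≥ δ) ∧ P.mulVec c 0 < P.mulVec c 1 := by
  intro P c
  constructor
  · intro i hi
    fin_cases i <;> simp_all [c] <;> linarith
  · simp [P, c, Matrix.mulVec, dotProduct, Fin.sum_univ_three]
    nlinarith
end
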